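/- Let c > 0, q ∈ [3, ∞), and suppose sequences (a_n), (b_n) of nonnegative reals satisfy: (1) there exist C₁ > 0 and ε_n → 0 with C₁ + ε_n(a_n² + b_n)^{1/2} ≥ ((q-1)/2)a_n² + ((q-3)/4)b_n², and, in the case q = 3, additionally (2) C₂ ≥ (1/2)a_n² + (1/4)b_n² - C₃ a_n⁴ for some C₂, C₃ > 0. Then, both for q > 3 and for q = 3, the sequences a_n and b_n are bounded. -/
import Mathlib


open Filter

/-- Quadratic bound: if `s² ≤ A + B s` with everything nonnegative, then `s ≤ B + √A`. -/
lemma quad_bound {s A B : ℝ} (hs : 0 ≤ s) (hA : 0 ≤ A) (hB : 0 ≤ B)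
    (h : s ^ 2 ≤ A + B * s) : s ≤ B + Real.sqrt A := by
  by_contra hcon
  push_neg at hcon
  have h1 : Real.sqrt A ≤ s := le_trans (by nlinarith [Real.sqrt_nonneg A]) hcon.le
  nlinarith [Real.sq_sqrt hA, Real.sqrt_nonneg A]

/-- An eventually bounded sequence is bounded. -/
lemma eventual_bound (u : ℕ → ℝ) (N : ℕ) (M : ℝ) (h : ∀ n, N ≤ n → u n ≤ M) :
    ∃ M', ∀ n, u n ≤ M' := by
  induction N generalizing M with
  | zero => exact ⟨M, fun n => h n (Nat.zero_le n)⟩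
  | succ N ih =>
    refine ih (max M (u N)) (fun n hn => ?_)
    rcases eq_or_lt_of_le hn with rfl | hlt
    · exact le_max_right _ _
    · exact le_trans (h n hlt) (le_max_left _ _)

/-- boundedness of Palais–Smale sequences, algebraic core: for `q ≥ 3`,
nonnegative sequences `a_n, b_n` satisfying
`C₁ + ε_n (a_n² + b_n)^{1/2} ≥ ((q-1)/2) a_n² + ((q-3)/4) b_n²` with `ε_n → 0`, and in the
case `q = 3` additionally `C₂ ≥ (1/2) a_n² + (1/4) b_n² - C₃ a_n⁴`, are bounded. -/
theorem stmt8 (c q : ℝ) (hc : 0 < c) (hq : 3 ≤ q)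
    (a b : ℕ → ℝ) (ha : ∀ n, 0 ≤ a n) (hb : ∀ n, 0 ≤ b n)
    (C₁ : ℝ) (hC₁ : 0 < C₁) (ε : ℕ → ℝ) (hε : Tendsto ε atTop (nhds 0))
    (h1 : ∀ n, ((q - 1) / 2) * (a n) ^ 2 + ((q - 3) / 4) * (b n) ^ 2 ≤
      C₁ + ε n * Real.sqrt ((a n) ^ 2 + b n))
    (h2 : q = 3 → ∃ C₂ C₃ : ℝ, 0 < C₂ ∧ 0 < C₃ ∧
      ∀ n, (1 / 2) * (a n) ^ 2 + (1 / 4) * (b n) ^ 2 - C₃ * (a n) ^ 4 ≤ C₂) :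
    (∃ M, ∀ n, a n ≤ M) ∧ (∃ M, ∀ n, b n ≤ M) := by
  -- basic facts about s n := √(a n ² + b n)
  set s : ℕ → ℝ := fun n => Real.sqrt ((a n) ^ 2 + b n) with hs_def
  have hs_nonneg : ∀ n, 0 ≤ s n := fun n => Real.sqrt_nonneg _
  have hs_sq : ∀ n, (s n) ^ 2 = (a n) ^ 2 + b n := by
    intro n
    exact Real.sq_sqrt (by nlinarith [sq_nonneg (a n), hb n])
  have ha_le_s : ∀ n, a n ≤ s n := by
    intro n
    have : a n = Real.sqrt ((a n) ^ 2) := (Real.sqrt_sq (ha n)).symm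
    rw [this]
    exact Real.sqrt_le_sqrt (by nlinarith [hb n])
  have hb_le_s2 : ∀ n, b n ≤ (s n) ^ 2 := by
    intro n; rw [hs_sq n]; nlinarith [sq_nonneg (a n)]
  rcases eq_or_lt_of_le hq with hq3 | hq3
  · -- case q = 3
    obtain ⟨C₂, C₃, hC₂, hC₃, h2'⟩ := h2 hq3.symm
    -- b n ≤ 2√C₂ + 2√C₃ a n ²
    have hbb : ∀ n, b n ≤ 2 * Real.sqrt C₂ + 2 * Real.sqrt C₃ * (a n) ^ 2 := by
      intro n
      have e2 := Real.sq_sqrt hC₂.le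
      have e3 := Real.sq_sqrt hC₃.le
      have p2 := Real.sqrt_nonneg C₂
      have p3 := Real.sqrt_nonneg C₃
      have hbsq : (b n) ^ 2 ≤ 4 * C₂ + 4 * C₃ * (a n) ^ 4 := by
        have := h2' n; nlinarith [sq_nonneg (a n)]
      have hsq : (b n) ^ 2 ≤ (2 * Real.sqrt C₂ + 2 * Real.sqrt C₃ * (a n) ^ 2) ^ 2 := by
        nlinarith [mul_nonneg (mul_nonneg p2 p3) (sq_nonneg (a n))]
      calc b n = Real.sqrt ((b n) ^ 2) := (Real.sqrt_sq (hb n)).symm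
        _ ≤ Real.sqrt ((2 * Real.sqrt C₂ + 2 * Real.sqrt C₃ * (a n) ^ 2) ^ 2) :=
            Real.sqrt_le_sqrt hsq
        _ = 2 * Real.sqrt C₂ + 2 * Real.sqrt C₃ * (a n) ^ 2 :=
            Real.sqrt_sq (by positivity)
    set K : ℝ := Real.sqrt (1 + 2 * Real.sqrt C₃) with hK_def
    set L : ℝ := Real.sqrt (2 * Real.sqrt C₂) with hL_def
    have hK_nonneg : 0 ≤ K := Real.sqrt_nonneg _
    have hL_nonneg : 0 ≤ L := Real.sqrt_nonneg _
    have hK_sq : K ^ 2 = 1 + 2 * Real.sqrt C₃ :=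
      Real.sq_sqrt (by positivity)
    have hL_sq : L ^ 2 = 2 * Real.sqrt C₂ :=
      Real.sq_sqrt (by positivity)
    -- s n ≤ K a n + L
    have hsKL : ∀ n, s n ≤ K * a n + L := by
      intro n
      have hKL : 0 ≤ K * a n + L := add_nonneg (mul_nonneg hK_nonneg (ha n)) hL_nonneg
      have h' : (a n) ^ 2 + b n ≤ (K * a n + L) ^ 2 := by
        have := hbb n
        nlinarith [mul_nonneg (mul_nonneg hK_nonneg (ha n)) hL_nonneg]
      calc s n ≤ Real.sqrt ((K * a n + L) ^ 2) := Real.sqrt_le_sqrt h'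
        _ = K * a n + L := Real.sqrt_sq hKL
    -- eventually |ε n| ≤ 1, then a n is bounded
    obtain ⟨N, hN⟩ := Metric.tendsto_atTop.mp hε 1 one_pos
    have haN : ∀ n, N ≤ n → a n ≤ K + Real.sqrt (C₁ + L) := by
      intro n hn
      have hεn : |ε n| ≤ 1 := by
        have := hN n hn; rw [Real.dist_eq, sub_zero] at this; linarith
      have key : (a n) ^ 2 ≤ (C₁ + L) + K * a n := by
        have h1n : ((q - 1) / 2) * (a n) ^ 2 + ((q - 3) / 4) * (b n) ^ 2 ≤
            C₁ + ε n * s n := h1 n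
        rw [← hq3] at h1n
        norm_num at h1n
        have hεs : ε n * s n ≤ K * a n + L := by
          calc ε n * s n ≤ |ε n| * s n := by
                exact mul_le_mul_of_nonneg_right (le_abs_self _) (hs_nonneg n)
            _ ≤ 1 * s n := mul_le_mul_of_nonneg_right hεn (hs_nonneg n)
            _ = s n := one_mul _
            _ ≤ K * a n + L := hsKL n
        nlinarith
      have := quad_bound (ha n) (by linarith) hK_nonneg key
      linarith
    obtain ⟨Ma, hMa⟩ := eventual_bound a N _ haN
    have hMa_nonneg : 0 ≤ Ma := le_trans (ha 0) (hMa 0)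
    refine ⟨⟨Ma, hMa⟩, ⟨2 * Real.sqrt C₂ + 2 * Real.sqrt C₃ * Ma ^ 2, fun n => ?_⟩⟩
    have : (a n) ^ 2 ≤ Ma ^ 2 := by nlinarith [ha n, hMa n]
    have := hbb n
    nlinarith [Real.sqrt_nonneg C₃]
  · -- case q > 3
    set k : ℝ := (q - 3) / 4 with hk_def
    have hk : 0 < k := by simp only [hk_def]; linarith
    set m : ℝ := min 1 k with hm_def
    have hm : 0 < m := lt_min one_pos hk
    have hm1 : m ≤ 1 := min_le_left _ _
    have hmk : m ≤ k := min_le_right _ _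
    obtain ⟨N, hN⟩ := Metric.tendsto_atTop.mp hε m hm
    have hsN : ∀ n, N ≤ n → s n ≤ 1 + Real.sqrt ((C₁ + k) / m) := by
      intro n hn
      have hεn : |ε n| ≤ m := by
        have := hN n hn; rw [Real.dist_eq, sub_zero] at this; linarith
      have h1n : ((q - 1) / 2) * (a n) ^ 2 + k * (b n) ^ 2 ≤
          C₁ + ε n * s n := h1 n
      have hεs : ε n * s n ≤ m * s n := by
        calc ε n * s n ≤ |ε n| * s n :=
              mul_le_mul_of_nonneg_right (le_abs_self _) (hs_nonneg n)
          _ ≤ m * s n := mul_le_mul_of_nonneg_right hεn (hs_nonneg n)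
      -- m (a² + b) - k ≤ ((q-1)/2) a² + k b²
      have hlow : m * ((a n) ^ 2 + b n) - k ≤
          ((q - 1) / 2) * (a n) ^ 2 + k * (b n) ^ 2 := by
        have hq1 : 1 ≤ (q - 1) / 2 := by linarith
        have hbn := hb n
        have h0 : m * b n - k ≤ k * (b n) ^ 2 := by
          nlinarith [sq_nonneg (b n - 1), mul_le_mul_of_nonneg_right hmk hbn]
        nlinarith [sq_nonneg (a n)]
      have hmss : m * (s n) ^ 2 ≤ C₁ + k + m * s n := by
        rw [hs_sq n]; linarith
      have key : (s n) ^ 2 ≤ (C₁ + k) / m + 1 * s n := by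
        rw [one_mul]
        calc (s n) ^ 2 = (m * (s n) ^ 2) / m := by field_simp
          _ ≤ (C₁ + k + m * s n) / m := by gcongr
          _ = (C₁ + k) / m + s n := by
              rw [add_div, mul_div_cancel_left₀ _ (ne_of_gt hm)]
      have := quad_bound (hs_nonneg n) (by positivity) zero_le_one key
      linarith
    set S : ℝ := 1 + Real.sqrt ((C₁ + k) / m) with hS_def
    have hS_nonneg : 0 ≤ S := by positivity
    have haN : ∀ n, N ≤ n → a n ≤ S := fun n hn => le_trans (ha_le_s n) (hsN n hn)
    have hbN : ∀ n, N ≤ n → b n ≤ S ^ 2 := by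
      intro n hn
      refine le_trans (hb_le_s2 n) ?_
      have := hsN n hn
      nlinarith [hs_nonneg n]
    exact ⟨eventual_bound a N S haN, eventual_bound b N (S ^ 2) hbN⟩
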